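/- arXiv:1508.06440 — 3 statements merged into one kernel-verified Lean document; each statement's English description precedes it below -/
import Mathlib

section
/- Let ρ ∈ (0,1). Let r be a real random variable with probability density function f_r(y) = ((1−ρ²)/(2ρ)) (2−y)^{−2} for y ∈ (1−ρ, 1+ρ) and f_r(y) = 0 otherwise, and let E be an exponential random variable with rate 1 independent of r. Then the product X = r·E has probability density function f_g(x) = ((1−ρ²)/(2ρ)) [F(1+ρ, x) − F(1−ρ, x)] for x > 0, where F(η,x) = η/(4(2−η)) · e^{−x/η} − ((2−x)/8) · e^{−x/2} · Ei(x(1/2 − 1/η)). -/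
/-!
Given `r = y > 0`, the product `y E` is exponential with mean `y`, so by Tonelli the law of `r E`
has density `x ↦ ∫ f_r(y) y⁻¹ e^{-x/y} dy`. For `x > 0`, up to the constant factor of `f_r`, the
integrand `(2 - η)⁻² η⁻¹ e^{-x/η}` is the `η`-derivative of `F(η, x)` on `(0, 2)` (the `Ei` term is
what makes this work, since `Ei' z = e^z / z`), so the integral over `(1 - ρ, 1 + ρ)` is
`F(1 + ρ, x) - F(1 - ρ, x)`.
-/

open MeasureTheory ProbabilityTheory

noncomputable section

/-- Exponential integral; for a negative argument `z = -u` with `u > 0`,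
`Ei z = -∫_u^∞ e^{-t}/t dt`. -/
def Ei (z : ℝ) : ℝ := -∫ t in Set.Ioi (-z), Real.exp (-t) / t

/-- The function `F(η, x)` from Theorem 1 of the paper. -/
def Ffun (η x : ℝ) : ℝ :=
  η / (4 * (2 - η)) * Real.exp (-x / η)
    - (2 - x) / 8 * Real.exp (-x / 2) * Ei (x * (1 / 2 - 1 / η))

/-- Law of an exponential random variable with rate 1: density `e^{-x}` on `(0,∞)`. -/
def expMeasure : Measure ℝ :=
  volume.withDensity (Set.indicator (Set.Ioi 0) fun x => ENNReal.ofReal (Real.exp (-x)))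

open Set Topology
open scoped ENNReal

theorem map_const_mul_withDensity {c : ℝ} (hc : c ≠ 0) {f : ℝ → ℝ≥0∞} (hf : Measurable f) :
    (volume.withDensity f).map (c * ·)
      = volume.withDensity fun x => ENNReal.ofReal |c⁻¹| * f (c⁻¹ * x) := by
  ext s hs
  have hc' : Measurable (c * · : ℝ → ℝ) := measurable_const_mul c
  rw [Measure.map_apply hc' hs, withDensity_apply _ (hc' hs), withDensity_apply _ hs,
    lintegral_const_mul _ (by fun_prop), ← smul_eq_mul, ← lintegral_smul_measure,
    ← Measure.restrict_smul,
    ← Real.map_volume_mul_left hc, setLIntegral_map hs (by fun_prop) hc']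
  simp only [inv_mul_cancel_left₀ hc]

theorem map_prod_eq_withDensity_lintegral {α β γ : Type*} [MeasurableSpace α] [MeasurableSpace β]
    [MeasurableSpace γ] {μ : Measure α} {ν : Measure β} {κ : Measure γ} [SFinite μ] [SFinite ν]
    [SFinite κ] {φ : α × β → γ} (hφ : Measurable φ) {g : α → γ → ℝ≥0∞}
    (hg : Measurable (Function.uncurry g))
    (h : ∀ᵐ a ∂μ, ν.map (fun b => φ (a, b)) = κ.withDensity (g a)) :
    (μ.prod ν).map φ = κ.withDensity fun c => ∫⁻ a, g a c ∂μ := by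
  ext s hs
  rw [Measure.map_apply hφ hs, Measure.prod_apply (hφ hs), withDensity_apply _ hs,
    lintegral_lintegral_swap (f := fun c a => g a c) (hg.comp measurable_swap).aemeasurable]
  refine lintegral_congr_ae ?_
  filter_upwards [h] with a ha
  rw [← withDensity_apply _ hs, ← ha, Measure.map_apply (by fun_prop) hs]
  rfl

def expDensityOfMean (m : ℝ) : ℝ → ℝ≥0∞ :=
  (Ioi 0).indicator fun x => ENNReal.ofReal (m⁻¹ * Real.exp (-x / m))

theorem measurable_uncurry_expDensityOfMean : Measurable (Function.uncurry expDensityOfMean) :=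
  show Measurable fun p : ℝ × ℝ => (Ioi 0).indicator
      (fun x => ENNReal.ofReal (p.1⁻¹ * Real.exp (-x / p.1))) p.2 from
    (by fun_prop : Measurable _).indicator (measurable_snd measurableSet_Ioi)

theorem map_const_mul_expMeasure {m : ℝ} (hm : 0 < m) :
    _root_.expMeasure.map (m * ·) = volume.withDensity (expDensityOfMean m) := by
  rw [_root_.expMeasure, map_const_mul_withDensity hm.ne'
    ((by fun_prop : Measurable _).indicator measurableSet_Ioi)]
  congr 1
  funext x
  have hm' : 0 < m⁻¹ := inv_pos.2 hm
  simp only [expDensityOfMean, indicator_apply, mem_Ioi, abs_of_pos hm',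
    mul_pos_iff_of_pos_left hm']
  split_ifs
  · rw [← ENNReal.ofReal_mul hm'.le, inv_mul_eq_div m x, neg_div]
  · exact mul_zero _

instance : IsProbabilityMeasure _root_.expMeasure := by
  constructor
  rw [_root_.expMeasure, withDensity_apply _ MeasurableSet.univ, Measure.restrict_univ,
    lintegral_indicator measurableSet_Ioi, ← ofReal_integral_eq_lintegral_ofReal
      (by simpa [IntegrableOn] using exp_neg_integrableOn_Ioi 0 one_pos)
      (ae_of_all _ fun x => (Real.exp_pos _).le),
    integral_exp_neg_Ioi_zero, ENNReal.ofReal_one]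

theorem integrableOn_exp_neg_div_self_Ioi {a : ℝ} (ha : 0 < a) :
    IntegrableOn (fun t => Real.exp (-t) / t) (Ioi a) := by
  refine ((exp_neg_integrableOn_Ioi a one_pos).mul_const a⁻¹).mono'
    (by fun_prop : Measurable fun t : ℝ => Real.exp (-t) / t).aestronglyMeasurable ?_
  filter_upwards [ae_restrict_mem measurableSet_Ioi] with t (ht : a < t)
  rw [Real.norm_of_nonneg (div_nonneg (Real.exp_pos _).le (ha.trans ht).le), neg_one_mul,
    div_eq_mul_inv]
  gcongr

theorem hasDerivAt_integral_exp_neg_div_self_Ioi {u : ℝ} (hu : 0 < u) :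
    HasDerivAt (fun v => ∫ t in Ioi v, Real.exp (-t) / t) (-(Real.exp (-u) / u)) u := by
  have hcont : ContinuousOn (fun t => Real.exp (-t) / t) (Ioi 0) :=
    fun t ht => by fun_prop (disch := exact (ne_of_gt ht))
  have hc : 0 < u / 2 := by positivity
  have hsplit : (fun v => ∫ t in Ioi v, Real.exp (-t) / t) =ᶠ[𝓝 u]
      fun v => (∫ t in Ioi (u / 2), Real.exp (-t) / t) - ∫ t in u / 2..v, Real.exp (-t) / t := by
    filter_upwards [Ioi_mem_nhds hu] with v hv
    rw [← intervalIntegral.integral_Ioi_sub_Ioi' (integrableOn_exp_neg_div_self_Ioi hc)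
      (integrableOn_exp_neg_div_self_Ioi hv), sub_sub_cancel]
  refine HasDerivAt.congr_of_eventuallyEq ?_ hsplit
  refine (intervalIntegral.integral_hasDerivAt_right ?_
    (hcont.stronglyMeasurableAtFilter isOpen_Ioi u hu)
    (hcont.continuousAt (Ioi_mem_nhds hu))).const_sub _
  exact (intervalIntegrable_iff_integrableOn_Ioc_of_le (by linarith)).2
    ((integrableOn_exp_neg_div_self_Ioi hc).mono_set Ioc_subset_Ioi_self)

theorem hasDerivAt_Ei {z : ℝ} (hz : z < 0) : HasDerivAt Ei (Real.exp z / z) z := by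
  have h := ((hasDerivAt_integral_exp_neg_div_self_Ioi (neg_pos.2 hz)).comp z
    (hasDerivAt_neg z)).neg
  exact h.congr_deriv (by rw [neg_neg, div_neg, neg_mul_neg, mul_one, neg_neg])

theorem hasDerivAt_Ffun {x η : ℝ} (hx : 0 < x) (hη : 0 < η) (hη2 : η < 2) :
    HasDerivAt (fun η => Ffun η x) (((2 - η) ^ 2)⁻¹ * (η⁻¹ * Real.exp (-x / η))) η := by
  have hη0 : η ≠ 0 := hη.ne'
  have h2η : 2 - η ≠ 0 := (sub_pos.2 hη2).ne'
  have hz : x * (1 / 2 - 1 / η) < 0 :=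
    mul_neg_of_pos_of_neg hx (sub_neg.2 (one_div_lt_one_div_of_lt hη hη2))
  have hA := ((hasDerivAt_id η).div (((hasDerivAt_id η).const_sub 2).const_mul 4)
    (mul_ne_zero four_ne_zero h2η)).mul ((hasDerivAt_const η (-x)).div (hasDerivAt_id η) hη0).exp
  have hB := ((hasDerivAt_Ei hz).comp η (((hasDerivAt_const η (1 / 2)).sub
    ((hasDerivAt_const η 1).div (hasDerivAt_id η) hη0)).const_mul x)).const_mul
    ((2 - x) / 8 * Real.exp (-x / 2))
  refine (hA.sub hB).congr_deriv ?_
  have hexp : Real.exp (x * (1 / 2 - 1 / η)) = Real.exp (-x / η) * (Real.exp (-x / 2))⁻¹ := by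
    rw [← Real.exp_neg, ← Real.exp_add]
    congr 1
    ring
  have hη2' : η - 2 ≠ 0 := sub_ne_zero.2 hη2.ne
  simp only [id, Pi.div_apply, hexp]
  field_simp
  ring

theorem continuousOn_deriv_Ffun (x : ℝ) :
    ContinuousOn (fun y => ((2 - y) ^ 2)⁻¹ * (y⁻¹ * Real.exp (-x / y))) (Ioo 0 2) :=
  fun y ⟨h0, h2⟩ => by
    have : 2 - y ≠ 0 := by linarith
    fun_prop (disch := first | exact h0.ne' | exact pow_ne_zero 2 this)

theorem integral_deriv_Ffun {a b x : ℝ} (hx : 0 < x) (ha : 0 < a) (hab : a ≤ b) (hb : b < 2) :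
    ∫ y in a..b, ((2 - y) ^ 2)⁻¹ * (y⁻¹ * Real.exp (-x / y)) = Ffun b x - Ffun a x := by
  have hsub : uIcc a b ⊆ Ioo 0 2 := by
    rw [uIcc_of_le hab]
    exact Icc_subset_Ioo ha hb
  exact intervalIntegral.integral_eq_sub_of_hasDerivAt
    (fun y hy => hasDerivAt_Ffun hx (hsub hy).1 (hsub hy).2)
    ((continuousOn_deriv_Ffun x).mono hsub).intervalIntegrable

theorem map_mul_prod_expMeasure {μ : Measure ℝ} [SFinite μ] (hμ : ∀ᵐ y ∂μ, 0 < y) :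
    (μ.prod _root_.expMeasure).map (fun p => p.1 * p.2)
      = volume.withDensity fun x => ∫⁻ y, expDensityOfMean y x ∂μ :=
  map_prod_eq_withDensity_lintegral (by fun_prop) measurable_uncurry_expDensityOfMean
    (hμ.mono fun _ => map_const_mul_expMeasure)

def scaleDensity (ρ : ℝ) : ℝ → ℝ≥0∞ :=
  (Ioo (1 - ρ) (1 + ρ)).indicator fun y => ENNReal.ofReal ((1 - ρ ^ 2) / (2 * ρ) * ((2 - y) ^ 2)⁻¹)

theorem measurable_scaleDensity (ρ : ℝ) : Measurable (scaleDensity ρ) :=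
  (by fun_prop : Measurable _).indicator measurableSet_Ioo

theorem ae_pos_withDensity_scaleDensity {ρ : ℝ} (hρ : ρ < 1) :
    ∀ᵐ y ∂volume.withDensity (scaleDensity ρ), 0 < y :=
  (ae_withDensity_iff (measurable_scaleDensity ρ)).2 <| ae_of_all _ fun _ hy =>
    (sub_pos.2 hρ).trans (mem_of_indicator_ne_zero hy).1

theorem isProbabilityMeasure_withDensity_scaleDensity {ρ : ℝ} (hρ0 : 0 < ρ) (hρ1 : ρ < 1) :
    IsProbabilityMeasure (volume.withDensity (scaleDensity ρ)) := by
  have hsub : Icc (1 - ρ) (1 + ρ) ⊆ Ioo 0 2 := Icc_subset_Ioo (by linarith) (by linarith)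
  have hc : 0 ≤ (1 - ρ ^ 2) / (2 * ρ) := div_nonneg (by nlinarith) (by linarith)
  have hderiv :
      ∀ y ∈ uIcc (1 - ρ) (1 + ρ), HasDerivAt (fun y => (2 - y)⁻¹) ((2 - y) ^ 2)⁻¹ y := by
    intro y hy
    rw [uIcc_of_le (by linarith)] at hy
    have := (hsub hy).2
    exact ((hasDerivAt_id y).const_sub 2).inv (sub_ne_zero.2 this.ne') |>.congr_deriv (by simp)
  have hcont : ContinuousOn (fun y : ℝ => ((2 - y) ^ 2)⁻¹) (Icc (1 - ρ) (1 + ρ)) := fun y hy => by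
    have : 2 - y ≠ 0 := by linarith [(hsub hy).2]
    fun_prop (disch := exact pow_ne_zero 2 this)
  constructor
  rw [withDensity_apply _ MeasurableSet.univ, Measure.restrict_univ, scaleDensity,
    lintegral_indicator measurableSet_Ioo, ← ofReal_integral_eq_lintegral_ofReal
      ((hcont.integrableOn_Icc.mono_set Ioo_subset_Icc_self).const_mul _)
      (ae_of_all _ fun y => mul_nonneg hc (by positivity)),
    ← integral_Ioc_eq_integral_Ioo, ← intervalIntegral.integral_of_le (by linarith),
    intervalIntegral.integral_const_mul, intervalIntegral.integral_eq_sub_of_hasDerivAt hderiv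
      (hcont.intervalIntegrable_of_Icc (by linarith)), ← ENNReal.ofReal_one]
  have h₁ : (2 : ℝ) - (1 + ρ) ≠ 0 := by linarith
  have h₂ : (2 : ℝ) - (1 - ρ) ≠ 0 := by linarith
  congr 1
  field_simp
  ring

theorem lintegral_expDensityOfMean_withDensity_scaleDensity {ρ x : ℝ} (hρ0 : 0 < ρ)
    (hρ1 : ρ < 1) :
    ∫⁻ y, expDensityOfMean y x ∂volume.withDensity (scaleDensity ρ)
      = (Ioi 0).indicator (fun x =>
          ENNReal.ofReal ((1 - ρ ^ 2) / (2 * ρ) * (Ffun (1 + ρ) x - Ffun (1 - ρ) x))) x := by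
  rw [lintegral_withDensity_eq_lintegral_mul _ (measurable_scaleDensity ρ)
    measurable_uncurry_expDensityOfMean.of_uncurry_right]
  by_cases hx : 0 < x
  swap
  · simp [expDensityOfMean, hx]
  have hsub : Icc (1 - ρ) (1 + ρ) ⊆ Ioo 0 2 := Icc_subset_Ioo (by linarith) (by linarith)
  have hc : 0 ≤ (1 - ρ ^ 2) / (2 * ρ) := div_nonneg (by nlinarith) (by linarith)
  have hdensity : ∀ y ∈ Ioo (1 - ρ) (1 + ρ),
      ENNReal.ofReal ((1 - ρ ^ 2) / (2 * ρ) * ((2 - y) ^ 2)⁻¹) * expDensityOfMean y x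
        = ENNReal.ofReal ((1 - ρ ^ 2) / (2 * ρ) * (((2 - y) ^ 2)⁻¹ * (y⁻¹ * Real.exp (-x / y)))) :=
    fun y _ => by
      rw [expDensityOfMean, indicator_of_mem (mem_Ioi.2 hx), ← ENNReal.ofReal_mul (by positivity),
        mul_assoc]
  simp only [Pi.mul_apply, scaleDensity,
    ← indicator_mul_left _ _ fun y => expDensityOfMean y x]
  rw [lintegral_indicator measurableSet_Ioo, setLIntegral_congr_fun measurableSet_Ioo hdensity,
    ← ofReal_integral_eq_lintegral_ofReal
      ((((continuousOn_deriv_Ffun x).mono hsub).integrableOn_Icc.mono_set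
        Ioo_subset_Icc_self).const_mul _)
      (ae_restrict_of_forall_mem measurableSet_Ioo fun y hy =>
        have : 0 < y := (sub_pos.2 hρ1).trans hy.1
        mul_nonneg hc (by positivity)),
    ← integral_Ioc_eq_integral_Ioo, ← intervalIntegral.integral_of_le (by linarith),
    intervalIntegral.integral_const_mul, integral_deriv_Ffun hx (by linarith) (by linarith)
      (by linarith), indicator_of_mem (mem_Ioi.2 hx)]

theorem stmt_2_general {Ω : Type*} [MeasurableSpace Ω] (P : Measure Ω)
    (ρ : ℝ) (hρ : ρ ∈ Set.Ioo (0 : ℝ) 1)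
    (r E : Ω → ℝ)
    (hlaw : Measure.map (fun ω => (r ω, E ω)) P
      = (volume.withDensity (Set.indicator (Set.Ioo (1 - ρ) (1 + ρ)) fun y =>
            ENNReal.ofReal ((1 - ρ ^ 2) / (2 * ρ) * ((2 - y) ^ 2)⁻¹))).prod expMeasure) :
    Measure.map (fun ω => r ω * E ω) P
      = volume.withDensity (Set.indicator (Set.Ioi 0) fun x =>
          ENNReal.ofReal ((1 - ρ ^ 2) / (2 * ρ) * (Ffun (1 + ρ) x - Ffun (1 - ρ) x))) := by
  obtain ⟨hρ0, hρ1⟩ := hρ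
  change _ = (volume.withDensity (scaleDensity ρ)).prod _root_.expMeasure at hlaw
  have := isProbabilityMeasure_withDensity_scaleDensity hρ0 hρ1
  -- `Measure.map` along a map that is not a.e.-measurable is `0`, which a probability law is not.
  have hae : AEMeasurable (fun ω => (r ω, E ω)) P :=
    .of_map_ne_zero (hlaw ▸ IsProbabilityMeasure.ne_zero _)
  have hmap :
      P.map (fun ω => r ω * E ω) = (P.map fun ω => (r ω, E ω)).map (fun p => p.1 * p.2) :=
    (AEMeasurable.map_map_of_aemeasurable (g := fun p : ℝ × ℝ => p.1 * p.2) (by fun_prop) hae).symm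
  rw [hmap, hlaw, map_mul_prod_expMeasure (ae_pos_withDensity_scaleDensity hρ1)]
  simp only [lintegral_expDensityOfMean_withDensity_scaleDensity hρ0 hρ1]

theorem stmt_2 {Ω : Type*} [MeasurableSpace Ω] (P : Measure Ω) [IsProbabilityMeasure P]
    (ρ : ℝ) (hρ : ρ ∈ Set.Ioo (0 : ℝ) 1)
    (r E : Ω → ℝ)
    (hlaw : Measure.map (fun ω => (r ω, E ω)) P
      = (volume.withDensity (Set.indicator (Set.Ioo (1 - ρ) (1 + ρ)) fun y =>
            ENNReal.ofReal ((1 - ρ ^ 2) / (2 * ρ) * ((2 - y) ^ 2)⁻¹))).prod expMeasure) :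
    Measure.map (fun ω => r ω * E ω) P
      = volume.withDensity (Set.indicator (Set.Ioi 0) fun x =>
          ENNReal.ofReal ((1 - ρ ^ 2) / (2 * ρ) * (Ffun (1 + ρ) x - Ffun (1 - ρ) x))) :=
  stmt_2_general P ρ hρ r E hlaw

end
end

section
/- Let ρ ∈ (0,1) and let U and V be independent exponential random variables with rate 1. Then the random variable r = ((1+ρ)² U + (1−ρ)² V) / ((1+ρ) U + (1−ρ) V) takes values in (1−ρ, 1+ρ) almost surely and has probability density function f_r(y) = ((1−ρ²)/(2ρ)) (2−y)^{−2} for y ∈ (1−ρ, 1+ρ) and f_r(y) = 0 otherwise. -/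
/-!
Write `a = 1 + ρ`, `b = 1 - ρ`. For `u, v > 0` the quotient `(a²u + b²v) / (au + bv)` is a
weighted mean of `a` and `b`, and it is at most `y ∈ (b, a)` exactly when `u ≤ c v` with
`c = b (y - b) / (a (a - y))`. Conditioning on `V` and using the Laplace transform of the
exponential law, `P(U ≤ c V) = E[1 - e^{-cV}] = c / (1 + c) = b (y - b) / ((a - b) (a + b - y))`,
which is the integral over `(b, y]` of the density `a b / ((a - b) (a + b - x)²)`. A law carried
by `(b, a)` is determined by its distribution function on `(b, a)`.
-/

open MeasureTheory ProbabilityTheory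

noncomputable section

open Set

lemma expMeasure_eq_expMeasure_one : _root_.expMeasure = expMeasure 1 := by
  rw [ProbabilityTheory.expMeasure, gammaMeasure]
  refine withDensity_congr_ae ?_
  have h0 : ∀ᵐ x : ℝ, x ≠ 0 := by simp [ae_iff]
  filter_upwards [h0] with x hx
  rcases hx.lt_or_gt with h | h
  · simp [gammaPDF, gammaPDFReal, not_le.2 h, not_lt.2 h.le]
  · simp [indicator_of_mem (mem_Ioi.2 h), gammaPDF, gammaPDFReal, h.le]

section Exponential

variable {r : ℝ}

lemma expMeasure_Iic (hr : 0 < r) (t : ℝ) :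
    expMeasure r (Iic t) = ENNReal.ofReal (1 - Real.exp (-(r * t))) := by
  have := isProbabilityMeasure_expMeasure hr
  rw [← ofReal_cdf, cdf_expMeasure_eq hr]
  split_ifs with ht
  · rfl
  · rw [ENNReal.ofReal_zero, eq_comm, ENNReal.ofReal_eq_zero, sub_nonpos, Real.one_le_exp_iff]
    nlinarith

lemma ae_pos_expMeasure (hr : 0 < r) : ∀ᵐ x ∂expMeasure r, 0 < x := by
  have : {x : ℝ | ¬ 0 < x} = Iic 0 := by ext; simp
  rw [ae_iff, this, expMeasure_Iic hr]
  simp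

lemma lintegral_exp_neg_mul_expMeasure (hr : 0 < r) {s : ℝ} (hs : -r < s) :
    ∫⁻ x, ENNReal.ofReal (Real.exp (-(s * x))) ∂expMeasure r
      = ENNReal.ofReal (r / (r + s)) := by
  have hpdf : exponentialPDF r =
      indicator (Ici 0) fun x => ENNReal.ofReal (r * Real.exp (-(r * x))) := by
    ext x
    by_cases hx : 0 ≤ x <;> simp [exponentialPDF_eq, hx]
  have hint : IntegrableOn (fun x => r * Real.exp (-(r + s) * x)) (Ici 0) :=
    (integrableOn_Ici_iff_integrableOn_Ioi (by simp)).2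
      ((integrableOn_exp_mul_Ioi (by linarith) 0).const_mul r)
  calc ∫⁻ x, ENNReal.ofReal (Real.exp (-(s * x))) ∂expMeasure r
      = ∫⁻ x in Ici 0, ENNReal.ofReal (r * Real.exp (-(r + s) * x)) := by
        change ∫⁻ x, _ ∂volume.withDensity (exponentialPDF r) = _
        rw [hpdf, withDensity_indicator measurableSet_Ici,
          lintegral_withDensity_eq_lintegral_mul _ (by fun_prop) (by fun_prop)]
        refine lintegral_congr fun x => ?_
        rw [Pi.mul_apply, ← ENNReal.ofReal_mul (by positivity), mul_assoc, ← Real.exp_add]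
        ring_nf
    _ = ENNReal.ofReal (r / (r + s)) := by
        rw [← ofReal_integral_eq_lintegral_ofReal hint (ae_of_all _ fun x => by positivity),
          integral_const_mul, integral_Ici_eq_integral_Ioi, integral_exp_mul_Ioi (by linarith)]
        congr 1
        field_simp
        simp

lemma ae_pos_expMeasure_prod (hr : 0 < r) :
    ∀ᵐ p ∂(expMeasure r).prod (expMeasure r), 0 < p.1 ∧ 0 < p.2 := by
  have := isProbabilityMeasure_expMeasure hr
  exact (measurePreserving_fst.quasiMeasurePreserving.ae (ae_pos_expMeasure hr)).and
    (measurePreserving_snd.quasiMeasurePreserving.ae (ae_pos_expMeasure hr))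

lemma expMeasure_prod_setOf_le_mul (hr : 0 < r) {c : ℝ} (hc : 0 ≤ c) :
    ((expMeasure r).prod (expMeasure r)) {p | p.1 ≤ c * p.2} = ENNReal.ofReal (c / (1 + c)) := by
  have := isProbabilityMeasure_expMeasure hr
  have hle : ∀ᵐ v ∂expMeasure r,
      ENNReal.ofReal (Real.exp (-(r * c * v))) ≤ ENNReal.ofReal 1 := by
    filter_upwards [ae_pos_expMeasure hr] with v hv
    refine ENNReal.ofReal_le_ofReal (Real.exp_le_one_iff.2 ?_)
    have : 0 ≤ r * c * v := by positivity
    linarith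
  have hL := lintegral_exp_neg_mul_expMeasure hr (s := r * c) (by nlinarith)
  rw [Measure.prod_apply_symm (measurableSet_le measurable_fst (by fun_prop))]
  change ∫⁻ v, expMeasure r (Iic (c * v)) ∂expMeasure r = _
  simp_rw [expMeasure_Iic hr, ← mul_assoc, ENNReal.ofReal_sub _ (Real.exp_nonneg _)]
  rw [lintegral_sub (by fun_prop) (hL ▸ ENNReal.ofReal_ne_top) hle, hL, lintegral_const,
    measure_univ, mul_one, ← ENNReal.ofReal_sub _ (by positivity)]
  congr 1
  field_simp
  ring

end Exponential

lemma lintegral_Ioc_ofReal_eq_sub {f f' : ℝ → ℝ} {a b : ℝ} (hab : a ≤ b)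
    (hderiv : ∀ x ∈ Icc a b, HasDerivAt f (f' x) x) (hf' : ContinuousOn f' (Icc a b))
    (hnonneg : ∀ x ∈ Ioc a b, 0 ≤ f' x) :
    ∫⁻ x in Ioc a b, ENNReal.ofReal (f' x) = ENNReal.ofReal (f b - f a) := by
  have hint : IntegrableOn f' (Ioc a b) := hf'.integrableOn_Icc.mono_set Ioc_subset_Icc_self
  rw [← ofReal_integral_eq_lintegral_ofReal hint
      ((ae_restrict_iff' measurableSet_Ioc).2 (ae_of_all _ hnonneg)),
    ← intervalIntegral.integral_of_le hab,
    intervalIntegral.integral_eq_sub_of_hasDerivAt (fun x hx => hderiv x (uIcc_of_le hab ▸ hx))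
      ((intervalIntegrable_iff_integrableOn_Ioc_of_le hab).2 hint)]

lemma MeasureTheory.Measure.ext_of_Iic_of_ae_mem_Ioo {μ ν : Measure ℝ} [IsProbabilityMeasure μ]
    [IsProbabilityMeasure ν] {a b : ℝ} (hμ : ∀ᵐ x ∂μ, x ∈ Ioo a b)
    (hν : ∀ᵐ x ∂ν, x ∈ Ioo a b)
    (h : ∀ y ∈ Ioo a b, μ (Iic y) = ν (Iic y)) : μ = ν := by
  have below {m : Measure ℝ} (hm : ∀ᵐ x ∂m, x ∈ Ioo a b) {y : ℝ} (hy : y ≤ a) :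
      m (Iic y) = 0 :=
    measure_eq_zero_iff_ae_notMem.2 (hm.mono fun x hx hxy => (hy.trans_lt hx.1).not_ge hxy)
  have above {m : Measure ℝ} [IsProbabilityMeasure m] (hm : ∀ᵐ x ∂m, x ∈ Ioo a b)
      {y : ℝ} (hy : b ≤ y) : m (Iic y) = 1 :=
    (prob_compl_eq_zero_iff measurableSet_Iic).1
      (measure_eq_zero_iff_ae_notMem.2 (hm.mono fun x hx hxy => hxy (hx.2.le.trans hy)))
  refine Measure.ext_of_Iic μ ν fun y => ?_
  rcases le_or_gt y a with hya | hay
  · rw [below hμ hya, below hν hya]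
  rcases lt_or_ge y b with hyb | hby
  · exact h y ⟨hay, hyb⟩
  · rw [above hμ hby, above hν hby]

def rayleighQuotientLaw (a b : ℝ) : Measure ℝ :=
  volume.withDensity
    (indicator (Ioo b a) fun y => ENNReal.ofReal (a * b / (a - b) * ((a + b - y) ^ 2)⁻¹))

section RayleighQuotientLaw

variable {a b : ℝ}

lemma setLIntegral_rayleighQuotientLaw_density (hb : 0 < b) {y : ℝ} (hy : y ∈ Ioc b a) :
    ∫⁻ x in Ioc b y, ENNReal.ofReal (a * b / (a - b) * ((a + b - x) ^ 2)⁻¹)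
      = ENNReal.ofReal (b * (y - b) / ((a - b) * (a + b - y))) := by
  obtain ⟨hby, hya⟩ := hy
  have hpos : ∀ x ∈ Icc b y, a + b - x ≠ 0 := fun x hx => by linarith [hx.2]
  rw [lintegral_Ioc_ofReal_eq_sub (f := fun x => a * b / (a - b) * (a + b - x)⁻¹) hby.le]
  · have : a - b ≠ 0 := by linarith
    have : a ≠ 0 := by linarith
    have : a + b - y ≠ 0 := by linarith
    congr 1
    simp only [add_sub_cancel_right]
    field_simp
    ring
  · intro x hx
    have hd : HasDerivAt (fun x => a + b - x) (-1) x := by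
      simpa using (hasDerivAt_id x).const_sub (a + b)
    simpa using (hd.inv (hpos x hx)).const_mul (a * b / (a - b))
  · exact continuousOn_const.mul (ContinuousOn.inv₀ (by fun_prop)
      fun x hx => pow_ne_zero 2 (hpos x hx))
  · intro x hx
    exact mul_nonneg (div_nonneg (by nlinarith) (by linarith)) (by positivity)

lemma rayleighQuotientLaw_Iic (hb : 0 < b) {y : ℝ} (hy : y ∈ Ioo b a) :
    rayleighQuotientLaw a b (Iic y) = ENNReal.ofReal (b * (y - b) / ((a - b) * (a + b - y))) := by
  rw [rayleighQuotientLaw, withDensity_apply _ measurableSet_Iic,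
    lintegral_indicator measurableSet_Ioo, Measure.restrict_restrict measurableSet_Ioo,
    ← setLIntegral_rayleighQuotientLaw_density hb ⟨hy.1, hy.2.le⟩]
  congr 2
  ext x
  simp only [mem_inter_iff, mem_Ioo, mem_Iic, mem_Ioc]
  constructor
  · rintro ⟨⟨h1, -⟩, h3⟩; exact ⟨h1, h3⟩
  · rintro ⟨h1, h2⟩; exact ⟨⟨h1, h2.trans_lt hy.2⟩, h2⟩

lemma isProbabilityMeasure_rayleighQuotientLaw (hb : 0 < b) (hba : b < a) :
    IsProbabilityMeasure (rayleighQuotientLaw a b) := by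
  constructor
  rw [rayleighQuotientLaw, withDensity_apply _ MeasurableSet.univ,
    lintegral_indicator measurableSet_Ioo, Measure.restrict_univ,
    Measure.restrict_congr_set Ioo_ae_eq_Ioc,
    setLIntegral_rayleighQuotientLaw_density hb ⟨hba, le_rfl⟩, add_sub_cancel_left,
    mul_comm b, div_self (mul_ne_zero (sub_ne_zero.2 hba.ne') hb.ne'), ENNReal.ofReal_one]

lemma ae_mem_Ioo_rayleighQuotientLaw : ∀ᵐ y ∂rayleighQuotientLaw a b, y ∈ Ioo b a := by
  rw [rayleighQuotientLaw, withDensity_indicator measurableSet_Ioo]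
  exact (withDensity_absolutelyContinuous _ _).ae_le (ae_restrict_mem measurableSet_Ioo)

end RayleighQuotientLaw

/-- With `a, b` the eigenvalues of `R` and `p` the squared moduli of the rotated Gaussian
coordinates, this is the generalized Rayleigh quotient `hᴴ R² h / hᴴ R h`. -/
def rayleighQuotient (a b : ℝ) (p : ℝ × ℝ) : ℝ :=
  (a ^ 2 * p.1 + b ^ 2 * p.2) / (a * p.1 + b * p.2)

section RayleighQuotient

variable {a b r : ℝ}

lemma measurable_rayleighQuotient : Measurable (rayleighQuotient a b) := by
  unfold rayleighQuotient
  fun_prop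

lemma rayleighQuotient_mem_Ioo (hb : 0 < b) (hba : b < a) {u v : ℝ} (hu : 0 < u) (hv : 0 < v) :
    rayleighQuotient a b (u, v) ∈ Ioo b a := by
  have hd : 0 < a * u + b * v := by nlinarith
  constructor
  · rw [rayleighQuotient, lt_div_iff₀ hd]; nlinarith [mul_pos (mul_pos hb (sub_pos.2 hba)) hu]
  · rw [rayleighQuotient, div_lt_iff₀ hd]; nlinarith [mul_pos (mul_pos hb (sub_pos.2 hba)) hv]

lemma rayleighQuotient_le_iff (hb : 0 < b) {y : ℝ} (hy : y ∈ Ioo b a) {u v : ℝ} (hu : 0 < u)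
    (hv : 0 < v) : rayleighQuotient a b (u, v) ≤ y ↔ u ≤ b * (y - b) / (a * (a - y)) * v := by
  obtain ⟨hby, hya⟩ := hy
  have hd : 0 < a * u + b * v := by nlinarith
  have ha : 0 < a * (a - y) := by nlinarith
  rw [rayleighQuotient, div_le_iff₀ hd, div_mul_eq_mul_div, le_div_iff₀ ha]
  constructor <;> intro h <;> linarith

lemma ae_rayleighQuotient_mem_Ioo (hr : 0 < r) (hb : 0 < b) (hba : b < a) :
    ∀ᵐ p ∂(expMeasure r).prod (expMeasure r), rayleighQuotient a b p ∈ Ioo b a := by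
  filter_upwards [ae_pos_expMeasure_prod hr] with p hp
  exact rayleighQuotient_mem_Ioo hb hba hp.1 hp.2

lemma map_rayleighQuotient_Iic (hr : 0 < r) (hb : 0 < b) {y : ℝ} (hy : y ∈ Ioo b a) :
    ((expMeasure r).prod (expMeasure r)).map (rayleighQuotient a b) (Iic y)
      = ENNReal.ofReal (b * (y - b) / ((a - b) * (a + b - y))) := by
  obtain ⟨hby, hya⟩ := hy
  have hpre : rayleighQuotient a b ⁻¹' Iic y =ᵐ[(expMeasure r).prod (expMeasure r)]
      {p | p.1 ≤ b * (y - b) / (a * (a - y)) * p.2} := by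
    filter_upwards [ae_pos_expMeasure_prod hr] with p hp
    exact propext (rayleighQuotient_le_iff hb ⟨hby, hya⟩ hp.1 hp.2)
  rw [Measure.map_apply measurable_rayleighQuotient measurableSet_Iic, measure_congr hpre,
    expMeasure_prod_setOf_le_mul hr (by apply div_nonneg <;> nlinarith)]
  have ha : a ≠ 0 := by linarith
  have hay : a - y ≠ 0 := by linarith
  have hsum : 1 + b * (y - b) / (a * (a - y)) = (a - b) * (a + b - y) / (a * (a - y)) := by
    field_simp
    ring
  rw [hsum, div_div_div_cancel_right₀ (mul_ne_zero ha hay)]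

lemma map_rayleighQuotient_expMeasure_prod (hr : 0 < r) (hb : 0 < b) (hba : b < a) :
    ((expMeasure r).prod (expMeasure r)).map (rayleighQuotient a b) = rayleighQuotientLaw a b := by
  have := isProbabilityMeasure_expMeasure hr
  have := Measure.isProbabilityMeasure_map (μ := (expMeasure r).prod (expMeasure r))
    (measurable_rayleighQuotient (a := a) (b := b)).aemeasurable
  have := isProbabilityMeasure_rayleighQuotientLaw hb hba
  refine Measure.ext_of_Iic_of_ae_mem_Ioo ?_ ae_mem_Ioo_rayleighQuotientLaw fun y hy =>
    (map_rayleighQuotient_Iic hr hb hy).trans (rayleighQuotientLaw_Iic hb hy).symm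
  exact (ae_map_iff measurable_rayleighQuotient.aemeasurable measurableSet_Ioo).2
    (ae_rayleighQuotient_mem_Ioo hr hb hba)

end RayleighQuotient

theorem stmt_3_general {Ω : Type*} [MeasurableSpace Ω] (P : Measure Ω)
    (ρ : ℝ) (hρ : ρ ∈ Set.Ioo (0 : ℝ) 1)
    (U V : Ω → ℝ)
    (hlaw : Measure.map (fun ω => (U ω, V ω)) P = expMeasure.prod expMeasure) :
    (∀ᵐ ω ∂P,
        ((1 + ρ) ^ 2 * U ω + (1 - ρ) ^ 2 * V ω) / ((1 + ρ) * U ω + (1 - ρ) * V ω)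
          ∈ Set.Ioo (1 - ρ) (1 + ρ)) ∧
    Measure.map
        (fun ω => ((1 + ρ) ^ 2 * U ω + (1 - ρ) ^ 2 * V ω) / ((1 + ρ) * U ω + (1 - ρ) * V ω)) P
      = volume.withDensity (Set.indicator (Set.Ioo (1 - ρ) (1 + ρ)) fun y =>
          ENNReal.ofReal ((1 - ρ ^ 2) / (2 * ρ) * ((2 - y) ^ 2)⁻¹)) := by
  obtain ⟨hρ0, hρ1⟩ := hρ
  have hb : 0 < 1 - ρ := by linarith
  have hba : 1 - ρ < 1 + ρ := by linarith
  rw [expMeasure_eq_expMeasure_one] at hlaw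
  have := isProbabilityMeasure_expMeasure (zero_lt_one' ℝ)
  have hUV : AEMeasurable (fun ω => (U ω, V ω)) P :=
    aemeasurable_of_map_neZero (by rw [hlaw]; infer_instance)
  have hmap := map_rayleighQuotient_expMeasure_prod one_pos hb hba
  rw [← hlaw, AEMeasurable.map_map_of_aemeasurable measurable_rayleighQuotient.aemeasurable hUV]
    at hmap
  refine ⟨ae_of_ae_map hUV (hlaw ▸ ae_rayleighQuotient_mem_Ioo one_pos hb hba), hmap.trans ?_⟩
  rw [rayleighQuotientLaw]
  congr with y
  ring_nf

theorem stmt_3 {Ω : Type*} [MeasurableSpace Ω] (P : Measure Ω) [IsProbabilityMeasure P]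
    (ρ : ℝ) (hρ : ρ ∈ Set.Ioo (0 : ℝ) 1)
    (U V : Ω → ℝ)
    (hlaw : Measure.map (fun ω => (U ω, V ω)) P = expMeasure.prod expMeasure) :
    (∀ᵐ ω ∂P,
        ((1 + ρ) ^ 2 * U ω + (1 - ρ) ^ 2 * V ω) / ((1 + ρ) * U ω + (1 - ρ) * V ω)
          ∈ Set.Ioo (1 - ρ) (1 + ρ)) ∧
    Measure.map
        (fun ω => ((1 + ρ) ^ 2 * U ω + (1 - ρ) ^ 2 * V ω) / ((1 + ρ) * U ω + (1 - ρ) * V ω)) P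
      = volume.withDensity (Set.indicator (Set.Ioo (1 - ρ) (1 + ρ)) fun y =>
          ENNReal.ofReal ((1 - ρ ^ 2) / (2 * ρ) * ((2 - y) ^ 2)⁻¹)) :=
  stmt_3_general P ρ hρ U V hlaw

end
end

section
/- Let α > 2 and η ∈ (0,2). Then ∫_0^∞ x^{2/α} F(η, x) dx = G(η, α), where F(η,x) = η/(4(2−η)) · e^{−x/η} − ((2−x)/8) · e^{−x/2} · Ei(x(1/2 − 1/η)), and G(η,α) = (η^{2/α+1}/4) { Γ(2/α + 1) [ η/(2−η) + (α/(α+2)) · ₂F₁(1, 2/α+1; 2/α+2; η/2) ] − (αη/(4(α+1))) · Γ(2/α + 2) · ₂F₁(1, 2/α+2; 2/α+3; η/2) }. -/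
/-!
Writing `Ei(-βx) = -∫_1^∞ e^{-βxr} r⁻¹ dr` and integrating in `x` first (Fubini applies because
the integrand has a sign), the Mellin transform `∫_0^∞ x^s e^{-μx} Ei(-βx) dx` becomes
`-Γ(s+1) ∫_1^∞ (μ + βr)^{-(s+1)} r⁻¹ dr`, and the substitution `t = (μ + β)/(μ + βr)` turns this
into the Euler integral of `₂F₁(1, s+1; s+2; μ/(μ+β))`. `F(η, ·)` combines `e^{-x/η}` with
`e^{-x/2} Ei(-βx)` for `β = 1/η - 1/2 > 0`, and then `μ + β = 1/η` gives the argument `η/2`.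
-/

open MeasureTheory

noncomputable section

/-- The Gauss hypergeometric function `₂F₁(1, b; b + 1; z)`, given by its Euler
integral representation `b ∫_0^1 t^(b-1) / (1 - z t) dt` (valid for `b > 0`, `z ∈ [0,1)`). -/
def hyp2F1 (b z : ℝ) : ℝ := b * ∫ t in (0 : ℝ)..1, t ^ (b - 1) / (1 - z * t)

/-- The function `G(η, α)` from Corollary 1 of the paper. -/
def Gfun (η α : ℝ) : ℝ :=
  η ^ (2 / α + 1) / 4 *
    (Real.Gamma (2 / α + 1) *
        (η / (2 - η) + α / (α + 2) * hyp2F1 (2 / α + 1) (η / 2))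
      - α * η / (4 * (α + 1)) * Real.Gamma (2 / α + 2) * hyp2F1 (2 / α + 2) (η / 2))

open Real Set

lemma integral_rpow_mul_exp_neg_mul_Ioi_eq_rpow_neg {s c : ℝ} (hs : -1 < s) (hc : 0 < c) :
    ∫ x in Ioi (0 : ℝ), x ^ s * exp (-(c * x)) = c ^ (-(s + 1)) * Gamma (s + 1) := by
  have := integral_rpow_mul_exp_neg_mul_Ioi (a := s + 1) (by linarith) hc
  rwa [add_sub_cancel_right, one_div, inv_rpow hc.le, ← rpow_neg hc.le] at this

lemma integrableOn_rpow_mul_exp_neg_mul_Ioi {s c : ℝ} (hs : -1 < s) (hc : 0 < c) :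
    IntegrableOn (fun x : ℝ => x ^ s * exp (-(c * x))) (Ioi 0) := by
  simpa using integrableOn_rpow_mul_exp_neg_mul_rpow hs zero_lt_one hc

lemma Ei_neg_eq_integral_Ioi_one {u : ℝ} (hu : 0 < u) :
    Ei (-u) = -∫ r in Ioi (1 : ℝ), exp (-(u * r)) / r := by
  have key := integral_comp_mul_left_Ioi (fun t => exp (-t) / t) 1 hu
  rw [mul_one, smul_eq_mul] at key
  have hscale : ∫ r in Ioi (1 : ℝ), exp (-(u * r)) / r
      = u * ∫ r in Ioi (1 : ℝ), exp (-(u * r)) / (u * r) := by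
    rw [← integral_const_mul]
    refine setIntegral_congr_fun measurableSet_Ioi fun r hr => ?_
    have : r ≠ 0 := (zero_lt_one.trans hr).ne'
    field_simp
  rw [Ei, neg_neg, hscale, key, ← mul_assoc, mul_inv_cancel₀ hu.ne', one_mul]

lemma integrableOn_add_mul_rpow_neg_div_Ioi_one {a μ β : ℝ} (ha : 0 < a) (hμ : 0 ≤ μ)
    (hβ : 0 < β) : IntegrableOn (fun r : ℝ => (μ + β * r) ^ (-a) / r) (Ioi 1) := by
  refine ((integrableOn_Ioi_rpow_of_lt (by linarith : -a - 1 < -1) zero_lt_one).const_mul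
    (β ^ (-a))).mono'
    (by fun_prop : Measurable fun r : ℝ => (μ + β * r) ^ (-a) / r).aestronglyMeasurable ?_
  filter_upwards [ae_restrict_mem measurableSet_Ioi] with r (hr : 1 < r)
  have hr0 : 0 < r := zero_lt_one.trans hr
  calc ‖(μ + β * r) ^ (-a) / r‖ = (μ + β * r) ^ (-a) / r :=
        Real.norm_of_nonneg (by positivity)
    _ ≤ (β * r) ^ (-a) / r := by
        gcongr ?_ / r
        exact rpow_le_rpow_of_nonpos (by positivity) (by linarith) (by linarith)
    _ = β ^ (-a) * r ^ (-a - 1) := by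
        rw [mul_rpow hβ.le hr0.le, rpow_sub_one hr0.ne']
        ring

lemma image_div_add_mul_Ioi_one {μ β : ℝ} (hμ : 0 ≤ μ) (hβ : 0 < β) :
    (fun r => (μ + β) / (μ + β * r)) '' Ioi 1 = Ioo 0 1 := by
  ext t
  constructor
  · rintro ⟨r, hr : 1 < r, rfl⟩
    have : 0 < μ + β * r := by nlinarith
    exact ⟨by positivity, by rw [div_lt_one this]; nlinarith⟩
  · rintro ⟨ht0, ht1⟩
    have hc : 0 < μ + β := by positivity
    refine ⟨((μ + β) / t - μ) / β, ?_,
      by simp only [mul_div_cancel₀ _ hβ.ne', add_sub_cancel, div_div_cancel₀ hc.ne']⟩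
    have : μ + β < (μ + β) / t := by rw [lt_div_iff₀ ht0]; nlinarith
    rw [mem_Ioi, lt_div_iff₀ hβ]
    linarith

lemma integral_add_mul_rpow_neg_div_Ioi_one {a μ β : ℝ} (ha : 0 < a) (hμ : 0 ≤ μ)
    (hβ : 0 < β) : ∫ r in Ioi (1 : ℝ), (μ + β * r) ^ (-a) / r
      = (μ + β) ^ (-a) / a * hyp2F1 a (μ / (μ + β)) := by
  set c := μ + β
  have hc : 0 < c := by positivity
  have hpos : ∀ r ∈ Ioi (1 : ℝ), 0 < μ + β * r := fun r (hr : 1 < r) => by nlinarith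
  have himage := image_div_add_mul_Ioi_one hμ hβ
  have hderiv : ∀ r ∈ Ioi (1 : ℝ), HasDerivWithinAt (fun r => c / (μ + β * r))
      (-(c * β) / (μ + β * r) ^ 2) (Ioi 1) r := fun r hr => by
    have h := (hasDerivAt_const r c).div (((hasDerivAt_id' r).const_mul β).const_add μ)
      (hpos r hr).ne'
    exact (h.congr_deriv (by ring)).hasDerivWithinAt
  have hinj : InjOn (fun r => c / (μ + β * r)) (Ioi 1) := fun r hr s hs h => by
    simp only [div_eq_div_iff (hpos r hr).ne' (hpos s hs).ne'] at h
    nlinarith [mul_pos hc hβ]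
  have hpoint : ∀ r ∈ Ioi (1 : ℝ), |-(c * β) / (μ + β * r) ^ 2| •
      ((c / (μ + β * r)) ^ (a - 1) / (1 - μ / c * (c / (μ + β * r))))
        = c ^ a * ((μ + β * r) ^ (-a) / r) := fun r hr => by
    have hm := hpos r hr
    have hr0 : (0 : ℝ) < r := zero_lt_one.trans hr
    rw [smul_eq_mul, abs_div, abs_neg, abs_of_pos (by positivity), abs_of_pos (by positivity),
      div_rpow hc.le hm.le, rpow_sub_one hc.ne', rpow_sub_one hm.ne', rpow_neg hm.le]
    field_simp
    ring
  have key := integral_image_eq_integral_abs_deriv_smul measurableSet_Ioi hderiv hinj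
    (fun t => t ^ (a - 1) / (1 - μ / c * t))
  rw [himage, setIntegral_congr_fun measurableSet_Ioi hpoint, integral_const_mul] at key
  rw [hyp2F1, intervalIntegral.integral_of_le zero_le_one, integral_Ioc_eq_integral_Ioo, key,
    rpow_neg hc.le]
  field_simp

section EiMellin

variable {s μ β : ℝ}

def eiKernel (s μ β x r : ℝ) : ℝ :=
  x ^ s * exp (-((μ + β * r) * x)) / r

lemma measurable_eiKernel : Measurable (Function.uncurry (eiKernel s μ β)) := by
  unfold eiKernel Function.uncurry; fun_prop

lemma eiKernel_nonneg {x r : ℝ} (hx : 0 < x) (hr : 0 < r) : 0 ≤ eiKernel s μ β x r := by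
  have := rpow_nonneg hx.le s
  unfold eiKernel; positivity

lemma integrableOn_eiKernel_Ioi_zero (hs : -1 < s) (hμ : 0 ≤ μ) (hβ : 0 < β) {r : ℝ}
    (hr : 0 < r) : IntegrableOn (fun x => eiKernel s μ β x r) (Ioi 0) :=
  (integrableOn_rpow_mul_exp_neg_mul_Ioi (c := μ + β * r) hs (by positivity)).div_const r

lemma integral_eiKernel_Ioi_zero (hs : -1 < s) (hμ : 0 ≤ μ) (hβ : 0 < β) {r : ℝ}
    (hr : 0 < r) : ∫ x in Ioi 0, eiKernel s μ β x r
      = Gamma (s + 1) * ((μ + β * r) ^ (-(s + 1)) / r) := by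
  simp only [eiKernel]
  rw [integral_div, integral_rpow_mul_exp_neg_mul_Ioi_eq_rpow_neg hs (by positivity)]
  ring

lemma integral_eiKernel_Ioi_one (hβ : 0 < β) {x : ℝ} (hx : 0 < x) :
    ∫ r in Ioi 1, eiKernel s μ β x r = -(x ^ s * exp (-(μ * x)) * Ei (-(β * x))) := by
  have hsplit : ∀ r, eiKernel s μ β x r = x ^ s * exp (-(μ * x)) * (exp (-(β * x * r)) / r) :=
    fun r => by
      rw [eiKernel, show -((μ + β * r) * x) = -(μ * x) + -(β * x * r) by ring, exp_add]
      ring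
  simp_rw [hsplit]
  rw [integral_const_mul, Ei_neg_eq_integral_Ioi_one (by positivity)]
  ring

lemma integrable_eiKernel (hs : -1 < s) (hμ : 0 ≤ μ) (hβ : 0 < β) :
    Integrable (Function.uncurry (eiKernel s μ β))
      ((volume.restrict (Ioi 0)).prod (volume.restrict (Ioi 1))) := by
  refine (integrable_prod_iff' measurable_eiKernel.aestronglyMeasurable).2 ⟨?_, ?_⟩
  · filter_upwards [ae_restrict_mem measurableSet_Ioi] with r (hr : 1 < r)
    exact integrableOn_eiKernel_Ioi_zero hs hμ hβ (zero_lt_one.trans hr)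
  · refine ((integrableOn_add_mul_rpow_neg_div_Ioi_one (a := s + 1) (by linarith) hμ hβ).const_mul
      (Gamma (s + 1))).congr ?_
    filter_upwards [ae_restrict_mem measurableSet_Ioi] with r (hr : 1 < r)
    have hr0 : 0 < r := zero_lt_one.trans hr
    rw [← integral_eiKernel_Ioi_zero hs hμ hβ hr0]
    refine setIntegral_congr_fun measurableSet_Ioi fun x (hx : 0 < x) => ?_
    exact (Real.norm_of_nonneg (eiKernel_nonneg hx hr0)).symm

lemma integrableOn_rpow_mul_exp_mul_Ei (hs : -1 < s) (hμ : 0 ≤ μ) (hβ : 0 < β) :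
    IntegrableOn (fun x => x ^ s * exp (-(μ * x)) * Ei (-(β * x))) (Ioi 0) := by
  refine (integrable_eiKernel hs hμ hβ).integral_prod_left.neg.congr ?_
  filter_upwards [ae_restrict_mem measurableSet_Ioi] with x (hx : 0 < x)
  simp only [Pi.neg_apply, Function.uncurry_apply_pair]
  rw [integral_eiKernel_Ioi_one hβ hx, neg_neg]

lemma integral_rpow_mul_exp_mul_Ei (hs : -1 < s) (hμ : 0 ≤ μ) (hβ : 0 < β) :
    ∫ x in Ioi 0, x ^ s * exp (-(μ * x)) * Ei (-(β * x))
      = -(Gamma (s + 1) * ((μ + β) ^ (-(s + 1)) / (s + 1) * hyp2F1 (s + 1) (μ / (μ + β)))) := by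
  calc ∫ x in Ioi 0, x ^ s * exp (-(μ * x)) * Ei (-(β * x))
      = -∫ x in Ioi 0, ∫ r in Ioi 1, eiKernel s μ β x r := by
        rw [← integral_neg]
        refine setIntegral_congr_fun measurableSet_Ioi fun x (hx : 0 < x) => ?_
        rw [integral_eiKernel_Ioi_one hβ hx, neg_neg]
    _ = -∫ r in Ioi 1, Gamma (s + 1) * ((μ + β * r) ^ (-(s + 1)) / r) := by
        rw [integral_integral_swap (integrable_eiKernel hs hμ hβ)]
        congr 1
        exact setIntegral_congr_fun measurableSet_Ioi fun r (hr : 1 < r) =>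
          integral_eiKernel_Ioi_zero hs hμ hβ (zero_lt_one.trans hr)
    _ = _ := by
        rw [integral_const_mul, integral_add_mul_rpow_neg_div_Ioi_one (by linarith) hμ hβ]

end EiMellin

lemma rpow_mul_Ffun (η p : ℝ) {x : ℝ} (hx : 0 < x) :
    x ^ p * Ffun η x = η / (4 * (2 - η)) * (x ^ p * exp (-(1 / η * x)))
      - 1 / 4 * (x ^ p * exp (-(1 / 2 * x)) * Ei (-((1 / η - 1 / 2) * x)))
      + 1 / 8 * (x ^ (p + 1) * exp (-(1 / 2 * x)) * Ei (-((1 / η - 1 / 2) * x))) := by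
  rw [Ffun, rpow_add_one hx.ne', show x * (1 / 2 - 1 / η) = -((1 / η - 1 / 2) * x) by ring,
    show -x / η = -(1 / η * x) by ring, show -x / 2 = -(1 / 2 * x) by ring]
  ring

theorem stmt_11 (α η : ℝ) (hα : 2 < α) (hη : η ∈ Set.Ioo (0 : ℝ) 2) :
    ∫ x in Set.Ioi (0 : ℝ), x ^ (2 / α) * Ffun η x = Gfun η α := by
  obtain ⟨hη0, hη2⟩ := hη
  have hp : -1 < 2 / α := by linarith [show 0 < 2 / α by positivity]
  have hp' : -1 < 2 / α + 1 := by linarith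
  have hμ : (0 : ℝ) ≤ 1 / 2 := by norm_num
  have hβ : 0 < 1 / η - 1 / 2 := by rw [sub_pos]; gcongr
  have hint₀ := integrableOn_rpow_mul_exp_neg_mul_Ioi hp (one_div_pos.2 hη0)
  have hint₁ := integrableOn_rpow_mul_exp_mul_Ei hp hμ hβ
  have hint₂ := integrableOn_rpow_mul_exp_mul_Ei hp' hμ hβ
  rw [setIntegral_congr_fun measurableSet_Ioi fun x hx => rpow_mul_Ffun η (2 / α) hx,
    integral_add ?_ (hint₂.const_mul _),
    integral_sub (hint₀.const_mul _) (hint₁.const_mul _), integral_const_mul, integral_const_mul,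
    integral_const_mul, integral_rpow_mul_exp_neg_mul_Ioi_eq_rpow_neg hp (one_div_pos.2 hη0),
    integral_rpow_mul_exp_mul_Ei hp hμ hβ, integral_rpow_mul_exp_mul_Ei hp' hμ hβ,
    show 1 / 2 + (1 / η - 1 / 2) = 1 / η by ring, show 1 / 2 / (1 / η) = η / 2 by field_simp,
    show 2 / α + 1 + 1 = 2 / α + 2 by ring]
  · simp only [one_div η, inv_rpow hη0.le, rpow_neg hη0.le, inv_inv]
    have hη_pow : η ^ (2 / α + 2) = η ^ (2 / α + 1) * η := by
      rw [← rpow_add_one hη0.ne']; ring_nf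
    rw [Gfun, hη_pow]
    field_simp
    ring
  · exact (hint₀.const_mul _).sub (hint₁.const_mul _)

end
end
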